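/- arXiv:2007.13032 — 11 statements merged into one kernel-verified Lean document; each statement's English description precedes it below -/
import Mathlib

section
/- If a mapping f: Y → Z between topological spaces is quasi-continuous and feebly open, then f is δ-open, i.e., for every nowhere dense subset N of Z, the preimage f⁻¹(N) is nowhere dense in Y. -/
open Set Function Topology

def QuasiCont {X Y : Type*} [TopologicalSpace X] [TopologicalSpace Y] (f : X → Y) : Prop :=
  ∀ (x : X) (W : Set Y), IsOpen W → f x ∈ W → ∀ U : Set X, IsOpen U → x ∈ U →
    ∃ V : Set X, IsOpen V ∧ V.Nonempty ∧ V ⊆ U ∧ f '' V ⊆ W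

def Nplus {X : Type*} (f : X → X) (A B : Set X) : Set ℕ :=
  {n : ℕ | (f^[n] '' A ∩ B).Nonempty}

def omegaLimitSet {X : Type*} [TopologicalSpace X] (f : X → X) (x : X) : Set X :=
  ⋂ k : ℕ, closure {y : X | ∃ n ≥ k, f^[n] x = y}

/-- TT: for all nonempty open U, V, N(U,V) = N₊(U,V) ∪ N₊(V,U) is nonempty. -/
def TTprop {X : Type*} [TopologicalSpace X] (f : X → X) : Prop :=
  ∀ U V : Set X, IsOpen U → U.Nonempty → IsOpen V → V.Nonempty →
    (Nplus f U V ∪ Nplus f V U).Nonempty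

/-- TT₊ -/
def TTplus {X : Type*} [TopologicalSpace X] (f : X → X) : Prop :=
  ∀ U V : Set X, IsOpen U → U.Nonempty → IsOpen V → V.Nonempty →
    (Nplus f U V).Nonempty

/-- X has a countable π-base. -/
def CountablePiBase (X : Type*) [TopologicalSpace X] : Prop :=
  ∃ P : ℕ → Set X, (∀ n, IsOpen (P n) ∧ (P n).Nonempty) ∧
    ∀ U : Set X, IsOpen U → U.Nonempty → ∃ n, P n ⊆ U

/-- X is perfect: no isolated points. -/
def PerfectPhase (X : Type*) [TopologicalSpace X] : Prop :=
  ∀ x : X, ¬ IsOpen ({x} : Set X)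

/-!
If `f ⁻¹' N` were dense in a nonempty open set `U`, feeble openness would give a nonempty open
set inside `f '' U`, hence one missing `closure N`; quasi-continuity then yields a nonempty open
`V ⊆ U` that `f` maps outside `N`, so `V` misses `f ⁻¹' N`, contradicting its density in `U`.
-/

section

variable {X Y : Type*} [TopologicalSpace X] [TopologicalSpace Y]

def FeeblyOpen (f : X → Y) : Prop :=
  ∀ U : Set X, IsOpen U → U.Nonempty → (interior (f '' U)).Nonempty

lemma isNowhereDense_of_forall_exists_isOpen_disjoint {s : Set X}
    (h : ∀ U : Set X, IsOpen U → U.Nonempty → ∃ V ⊆ U, IsOpen V ∧ V.Nonempty ∧ Disjoint V s) :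
    IsNowhereDense s := by
  rw [IsNowhereDense, ← not_nonempty_iff_eq_empty]
  intro hne
  obtain ⟨V, hVU, hVo, ⟨v, hv⟩, hVs⟩ := h _ isOpen_interior hne
  exact (hVs.closure_right hVo).notMem_of_mem_left hv (interior_subset (hVU hv))

lemma IsNowhereDense.diff_closure_nonempty {N W : Set X} (hN : IsNowhereDense N)
    (hW : IsOpen W) (hWne : W.Nonempty) : (W \ closure N).Nonempty := by
  have hdense : Dense (closure N)ᶜ := interior_eq_empty_iff_dense_compl.mp hN
  simpa only [sdiff_eq, inter_comm] using hdense.inter_open_nonempty W hW hWne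

lemma QuasiCont.exists_isOpen_subset_mapsTo {f : X → Y} (hf : QuasiCont f) {U : Set X}
    (hU : IsOpen U) {W : Set Y} (hW : IsOpen W) (hUW : (f '' U ∩ W).Nonempty) :
    ∃ V ⊆ U, IsOpen V ∧ V.Nonempty ∧ MapsTo f V W := by
  obtain ⟨_, ⟨x, hxU, rfl⟩, hxW⟩ := hUW
  obtain ⟨V, hVo, hVne, hVU, hVW⟩ := hf x W hW hxW U hU hxU
  exact ⟨V, hVU, hVo, hVne, mapsTo_iff_image_subset.mpr hVW⟩

lemma QuasiCont.isNowhereDense_preimage {f : X → Y} (hf : QuasiCont f) (hfo : FeeblyOpen f)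
    {N : Set Y} (hN : IsNowhereDense N) : IsNowhereDense (f ⁻¹' N) := by
  refine isNowhereDense_of_forall_exists_isOpen_disjoint fun U hU hUne ↦ ?_
  set W := interior (f '' U) \ closure N
  have hWo : IsOpen W := isOpen_interior.sdiff isClosed_closure
  obtain ⟨z, hz⟩ := hN.diff_closure_nonempty isOpen_interior (hfo U hU hUne)
  have hUW : (f '' U ∩ W).Nonempty := ⟨z, interior_subset hz.1, hz⟩
  obtain ⟨V, hVU, hVo, hVne, hVW⟩ := hf.exists_isOpen_subset_mapsTo hU hWo hUW
  refine ⟨V, hVU, hVo, hVne, disjoint_left.mpr fun v hv hvN ↦ ?_⟩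
  exact (hVW hv).2 (subset_closure hvN)

end

theorem quasicont_feeblyOpen_deltaOpen {Y Z : Type*} [TopologicalSpace Y] [TopologicalSpace Z]
    (f : Y → Z) (hqc : QuasiCont f)
    (hfeebly : ∀ U : Set Y, IsOpen U → U.Nonempty → (interior (f '' U)).Nonempty) :
    ∀ N : Set Z, IsNowhereDense N → IsNowhereDense (f ⁻¹' N) :=
  fun _ hN ↦ hqc.isNowhereDense_preimage hfeebly hN
end

section
/- Let (X,f) be a dynamical system such that fⁿ is quasi-continuous for all n ∈ ℕ, where X is a perfect Hausdorff space. If for every pair of nonempty open sets U, V ⊆ X there exists n ∈ ℤ with fⁿ(U) ∩ V ≠ ∅ (property TT), then for every nonempty open set U ⊆ X, the set N₊(U,U) = {n ∈ ℕ : fⁿ(U) ∩ U ≠ ∅} is infinite. -/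
open Set Function Topology

/-!
Suppose `N₊(U,U)` were bounded by `k`. Since `X` is a perfect Hausdorff space, quasi-continuity
of `fᵐ` lets us shrink any two nonempty open sets so that `fᵐ` maps (a piece of) the first one off
the second. Doing this for `m = 0, …, k` in both directions yields nonempty open `V₁, V₂ ⊆ U` with
`N(V₁,V₂) ⊆ (k, ∞)`, while TT makes `N(V₁,V₂)` nonempty. Any `n ∈ N(V₁,V₂)` lies in `N₊(U,U)`,
a contradiction.
-/

lemma Nplus_mono {X : Type*} {f : X → X} {A A' B B' : Set X} (hA : A ⊆ A') (hB : B ⊆ B') :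
    Nplus f A B ⊆ Nplus f A' B' :=
  fun _ ⟨y, hyA, hyB⟩ => ⟨y, image_mono hA hyA, hB hyB⟩

lemma notMem_Nplus_iff {X : Type*} {f : X → X} {A B : Set X} {m : ℕ} :
    m ∉ Nplus f A B ↔ Disjoint (f^[m] '' A) B :=
  not_nonempty_iff_eq_empty.trans disjoint_iff_inter_eq_empty.symm

section

variable {X : Type*} [TopologicalSpace X]

lemma PerfectPhase.exists_mem_ne (hperf : PerfectPhase X) {V : Set X} (hV : IsOpen V)
    (hVne : V.Nonempty) (y : X) : ∃ z ∈ V, z ≠ y := by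
  by_contra! h
  exact hperf y (eq_singleton_iff_nonempty_unique_mem.2 ⟨hVne, h⟩ ▸ hV)

lemma QuasiCont.exists_disjoint_image {Y : Type*} [TopologicalSpace Y] [T2Space Y]
    (hY : PerfectPhase Y) {g : X → Y} (hg : QuasiCont g) {V₁ : Set X} {V₂ : Set Y}
    (hV₁ : IsOpen V₁) (hV₁ne : V₁.Nonempty) (hV₂ : IsOpen V₂) (hV₂ne : V₂.Nonempty) :
    ∃ W₁ ⊆ V₁, IsOpen W₁ ∧ W₁.Nonempty ∧ ∃ W₂ ⊆ V₂, IsOpen W₂ ∧ W₂.Nonempty ∧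
      Disjoint (g '' W₁) W₂ := by
  obtain ⟨x, hx⟩ := hV₁ne
  obtain ⟨z, hz, hzx⟩ := hY.exists_mem_ne hV₂ hV₂ne (g x)
  obtain ⟨A, B, hA, hB, hxA, hzB, hAB⟩ := t2_separation hzx.symm
  obtain ⟨W₁, hW₁, hW₁ne, hW₁V₁, hW₁A⟩ := hg x A hA hxA V₁ hV₁ hx
  exact ⟨W₁, hW₁V₁, hW₁, hW₁ne, V₂ ∩ B, inter_subset_left, hV₂.inter hB, ⟨z, hz, hzB⟩,
    (hAB.mono_left hW₁A).mono_right inter_subset_right⟩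

variable [T2Space X] {f : X → X}

lemma exists_open_subsets_notMem_Nplus {m : ℕ} (hperf : PerfectPhase X) (hqc : QuasiCont (f^[m]))
    {V₁ V₂ : Set X} (hV₁ : IsOpen V₁) (hV₁ne : V₁.Nonempty) (hV₂ : IsOpen V₂)
    (hV₂ne : V₂.Nonempty) :
    ∃ W₁ ⊆ V₁, IsOpen W₁ ∧ W₁.Nonempty ∧ ∃ W₂ ⊆ V₂, IsOpen W₂ ∧ W₂.Nonempty ∧
      m ∉ Nplus f W₁ W₂ ∪ Nplus f W₂ W₁ := by
  obtain ⟨W₁, hW₁V₁, hW₁, hW₁ne, W₂, hW₂V₂, hW₂, hW₂ne, h₁₂⟩ :=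
    hqc.exists_disjoint_image hperf hV₁ hV₁ne hV₂ hV₂ne
  obtain ⟨W₂', hW₂'W₂, hW₂', hW₂'ne, W₁', hW₁'W₁, hW₁', hW₁'ne, h₂₁⟩ :=
    hqc.exists_disjoint_image hperf hW₂ hW₂ne hW₁ hW₁ne
  refine ⟨W₁', hW₁'W₁.trans hW₁V₁, hW₁', hW₁'ne, W₂', hW₂'W₂.trans hW₂V₂, hW₂', hW₂'ne, ?_⟩
  rintro (h | h)
  · exact notMem_Nplus_iff.2 h₁₂ (Nplus_mono hW₁'W₁ hW₂'W₂ h)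
  · exact notMem_Nplus_iff.2 h₂₁ h

lemma exists_open_subsets_Nplus_subset_Ici (hperf : PerfectPhase X)
    (hqc : ∀ n : ℕ, QuasiCont (f^[n])) (k : ℕ) {U : Set X} (hU : IsOpen U)
    (hUne : U.Nonempty) :
    ∃ V₁ ⊆ U, IsOpen V₁ ∧ V₁.Nonempty ∧ ∃ V₂ ⊆ U, IsOpen V₂ ∧ V₂.Nonempty ∧
      Nplus f V₁ V₂ ∪ Nplus f V₂ V₁ ⊆ Ici k := by
  induction k with
  | zero => exact ⟨U, subset_rfl, hU, hUne, U, subset_rfl, hU, hUne, fun n _ => Nat.zero_le n⟩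
  | succ k ih =>
    obtain ⟨V₁, hV₁U, hV₁, hV₁ne, V₂, hV₂U, hV₂, hV₂ne, hV⟩ := ih
    obtain ⟨W₁, hW₁V₁, hW₁, hW₁ne, W₂, hW₂V₂, hW₂, hW₂ne, hk⟩ :=
      exists_open_subsets_notMem_Nplus hperf (hqc k) hV₁ hV₁ne hV₂ hV₂ne
    refine ⟨W₁, hW₁V₁.trans hV₁U, hW₁, hW₁ne, W₂, hW₂V₂.trans hV₂U, hW₂, hW₂ne, fun n hn => ?_⟩
    have hnk : k ≤ n := hV (union_subset_union (Nplus_mono hW₁V₁ hW₂V₂)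
      (Nplus_mono hW₂V₂ hW₁V₁) hn)
    exact Nat.succ_le_of_lt (lt_of_le_of_ne hnk fun h => hk (h ▸ hn))

end

theorem NplusUU_infinite {X : Type*} [TopologicalSpace X] [T2Space X]
    (f : X → X) (hperf : PerfectPhase X)
    (hqc : ∀ n : ℕ, QuasiCont (f^[n]))
    (hTT : TTprop f) :
    ∀ U : Set X, IsOpen U → U.Nonempty → (Nplus f U U).Infinite := by
  intro U hU hUne
  refine infinite_of_not_bddAbove fun ⟨k, hk⟩ => ?_
  obtain ⟨V₁, hV₁U, hV₁, hV₁ne, V₂, hV₂U, hV₂, hV₂ne, hV⟩ :=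
    exists_open_subsets_Nplus_subset_Ici hperf hqc (k + 1) hU hUne
  obtain ⟨n, hn⟩ := hTT V₁ V₂ hV₁ hV₁ne hV₂ hV₂ne
  have hnU : n ∈ Nplus f U U := hn.elim (Nplus_mono hV₁U hV₂U ·) (Nplus_mono hV₂U hV₁U ·)
  exact absurd (hk hnU) (not_le.2 (hV hn))
end

section
/- Let (X,f) be a dynamical system with fⁿ quasi-continuous for all n ∈ ℕ, where X is a Baire space with a countable π-base. If there exists x ∈ X with ω f(x) = X (property DO₊₊), then for every nonempty open U ⊆ X and every k ∈ ℕ, the set ⋃_{n ≥ k} int(f⁻ⁿ(U)) is dense in X. -/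
open Set Function Topology

/-
If the orbit of `x` accumulates everywhere, then for any nonempty open `G` some iterate
`f^[m] x` lies in `G`, and a later iterate `f^[m + j] x` with `j ≥ k` lies in `U`.
Quasi-continuity of `f^[j]` at `f^[m] x` then yields a nonempty open `V ⊆ G` with
`f^[j] '' V ⊆ U`, i.e. `V ⊆ interior (f^[j] ⁻¹' U)`.
-/

theorem QuasiCont.inter_interior_preimage_nonempty {X Y : Type*} [TopologicalSpace X]
    [TopologicalSpace Y] {f : X → Y} (hf : QuasiCont f) {x : X} {G : Set X} {U : Set Y}
    (hG : IsOpen G) (hxG : x ∈ G) (hU : IsOpen U) (hxU : f x ∈ U) :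
    (G ∩ interior (f ⁻¹' U)).Nonempty := by
  obtain ⟨V, hVopen, ⟨v, hv⟩, hVG, hVU⟩ := hf x U hU hxU G hG hxG
  exact ⟨v, hVG hv, interior_maximal (image_subset_iff.mp hVU) hVopen hv⟩

theorem dense_tail_orbit_of_omegaLimitSet_eq_univ {X : Type*} [TopologicalSpace X]
    {f : X → X} {x : X} (hx : omegaLimitSet f x = univ) (m : ℕ) :
    Dense {y : X | ∃ n ≥ m, f^[n] x = y} :=
  fun y => mem_iInter.mp (hx ▸ mem_univ y) m

theorem exists_iterate_mem_of_omegaLimitSet_eq_univ {X : Type*} [TopologicalSpace X]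
    {f : X → X} {x : X} (hx : omegaLimitSet f x = univ) (m : ℕ) {G : Set X}
    (hG : IsOpen G) (hGne : G.Nonempty) : ∃ n ≥ m, f^[n] x ∈ G := by
  obtain ⟨_, hyG, n, hn, rfl⟩ :=
    (dense_tail_orbit_of_omegaLimitSet_eq_univ hx m).inter_open_nonempty G hG hGne
  exact ⟨n, hn, hyG⟩

theorem DOplusplus_implies_dense_union_interiors_general {X : Type*} [TopologicalSpace X]
    (f : X → X)
    (hqc : ∀ n : ℕ, QuasiCont (f^[n]))
    (hDO : ∃ x : X, omegaLimitSet f x = Set.univ) :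
    ∀ U : Set X, IsOpen U → U.Nonempty → ∀ k : ℕ,
      Dense (⋃ n : ℕ, ⋃ (_ : n ≥ k), interior (f^[n] ⁻¹' U)) := by
  obtain ⟨x, hx⟩ := hDO
  intro U hU hUne k
  refine dense_iff_inter_open.mpr fun G hG hGne => ?_
  obtain ⟨m, -, hmG⟩ := exists_iterate_mem_of_omegaLimitSet_eq_univ hx 0 hG hGne
  obtain ⟨n, hn, hnU⟩ := exists_iterate_mem_of_omegaLimitSet_eq_univ hx (m + k) hU hUne
  have hjU : f^[n - m] (f^[m] x) ∈ U := by
    rwa [← iterate_add_apply, Nat.sub_add_cancel (by omega)]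
  obtain ⟨v, hvG, hvU⟩ := (hqc (n - m)).inter_interior_preimage_nonempty hG hmG hU hjU
  exact ⟨v, hvG, mem_biUnion (by omega : n - m ≥ k) hvU⟩

theorem DOplusplus_implies_dense_union_interiors {X : Type*} [TopologicalSpace X]
    [BaireSpace X] (f : X → X)
    (hpibase : CountablePiBase X)
    (hqc : ∀ n : ℕ, QuasiCont (f^[n]))
    (hDO : ∃ x : X, omegaLimitSet f x = Set.univ) :
    ∀ U : Set X, IsOpen U → U.Nonempty → ∀ k : ℕ,
      Dense (⋃ n : ℕ, ⋃ (_ : n ≥ k), interior (f^[n] ⁻¹' U)) :=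
  DOplusplus_implies_dense_union_interiors_general f hqc hDO
end

section
/- Let (X,f) be a dynamical system with fⁿ quasi-continuous for all n ∈ ℕ, where X is a Baire space with a countable π-base {Pₙ : n ∈ ℕ}. If for every nonempty open U ⊆ X and every k ∈ ℕ the set ⋃_{n ≥ k} int(f⁻ⁿ(U)) is dense in X, then the set {x ∈ X : ω f(x) = X} contains a dense Gδ-set of X. -/
open Set Function Topology

/-
For each member `P m` of the π-base and each `k`, the open set of points entering `P m` at
some time `n ≥ k` through the interior of `f^[n] ⁻¹' P m` is dense by hypothesis. In a Baire
space their countable intersection is a dense Gδ, and each of its points visits every `P m`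
infinitely often, hence comes back arbitrarily late into every nonempty open set.
-/

section OmegaLimit

variable {X : Type*} [TopologicalSpace X] {f : X → X} {x : X}

theorem omegaLimitSet_eq_univ_of_frequently_mem_piBase {P : ℕ → Set X}
    (hP : ∀ U : Set X, IsOpen U → U.Nonempty → ∃ m, P m ⊆ U)
    (hx : ∀ m k, ∃ n ≥ k, f^[n] x ∈ P m) : omegaLimitSet f x = univ := by
  refine eq_univ_of_forall fun y => mem_iInter.2 fun k => mem_closure_iff.2 fun U hU hyU => ?_
  obtain ⟨m, hmU⟩ := hP U hU ⟨y, hyU⟩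
  obtain ⟨n, hnk, hn⟩ := hx m k
  exact ⟨f^[n] x, hmU hn, n, hnk, rfl⟩

theorem setOf_omegaLimitSet_eq_univ_mem_residual [BaireSpace X] (hpibase : CountablePiBase X)
    (hdense : ∀ U : Set X, IsOpen U → U.Nonempty → ∀ k : ℕ,
      Dense (⋃ n ≥ k, interior (f^[n] ⁻¹' U))) :
    {x : X | omegaLimitSet f x = univ} ∈ residual X := by
  obtain ⟨P, hP, hPbase⟩ := hpibase
  have hvisits : ⋂ m, ⋂ k, ⋃ n ≥ k, interior (f^[n] ⁻¹' P m) ∈ residual X :=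
    countable_iInter_mem.2 fun m => countable_iInter_mem.2 fun k =>
      residual_of_dense_open (isOpen_biUnion fun _ _ => isOpen_interior)
        (hdense (P m) (hP m).1 (hP m).2 k)
  refine Filter.mem_of_superset hvisits fun x hx => ?_
  refine omegaLimitSet_eq_univ_of_frequently_mem_piBase hPbase fun m k => ?_
  obtain ⟨n, hnk, hn⟩ := mem_iUnion₂.1 (mem_iInter.1 (mem_iInter.1 hx m) k)
  exact ⟨n, hnk, interior_subset (s := f^[n] ⁻¹' P m) hn⟩

end OmegaLimit

theorem dense_union_interiors_implies_residual_omega_general {X : Type*} [TopologicalSpace X]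
    [BaireSpace X] (f : X → X)
    (hpibase : CountablePiBase X)
    (hdense : ∀ U : Set X, IsOpen U → U.Nonempty → ∀ k : ℕ,
      Dense (⋃ n : ℕ, ⋃ (_ : n ≥ k), interior (f^[n] ⁻¹' U))) :
    ∃ S : Set X, IsGδ S ∧ Dense S ∧ S ⊆ {x : X | omegaLimitSet f x = Set.univ} := by
  obtain ⟨S, hSω, hSGδ, hSdense⟩ :=
    mem_residual.1 (setOf_omegaLimitSet_eq_univ_mem_residual hpibase hdense)
  exact ⟨S, hSGδ, hSdense, hSω⟩

theorem dense_union_interiors_implies_residual_omega {X : Type*} [TopologicalSpace X]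
    [BaireSpace X] (f : X → X)
    (hpibase : CountablePiBase X)
    (hqc : ∀ n : ℕ, QuasiCont (f^[n]))
    (hdense : ∀ U : Set X, IsOpen U → U.Nonempty → ∀ k : ℕ,
      Dense (⋃ n : ℕ, ⋃ (_ : n ≥ k), interior (f^[n] ⁻¹' U))) :
    ∃ S : Set X, IsGδ S ∧ Dense S ∧ S ⊆ {x : X | omegaLimitSet f x = Set.univ} :=
  dense_union_interiors_implies_residual_omega_general f hpibase hdense
end

section
/- Let (X,f) be a dynamical system on a perfect Hausdorff Baire space X with a countable π-base, where fⁿ is quasi-continuous for all n ∈ ℕ. Then the following are equivalent: (a) for every pair of nonempty open sets U, V the set N(U,V) is nonempty (TT); (b) for every pair of nonempty open sets U, V the set N₊(U,V) is infinite (TT₊₊); (c) there exists a point with dense forward orbit (DO₊); (d) there exists a point x with ω f(x) = X (DO₊₊). -/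
/-!
Under topological transitivity, quasi-continuity turns a single visit `fⁿ x ∈ V` with `x ∈ U`
into a whole open set `W ⊆ U` with `fⁿ(W) ⊆ V`. Splitting an open set into two disjoint open
pieces (possible since `X` is perfect and Hausdorff) yields positive return times, and feeding
the open set `W` back in makes them arbitrarily large; this gives `TT₊₊`. Quasi-continuity
also makes `⋃ₘ int f⁻ᵐ(P k)` dense for each member `P k` of the π-base, so Baire's theorem
produces a point whose orbit meets every `P k`. A dense orbit stays dense after removing
finitely many points (no isolated points), so every tail is dense and `ω f(x) = X`; and two
dense tails give `TT` back.
-/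

open Set Function Topology

theorem add_mem_Nplus {X : Type*} {f : X → X} {U V W : Set X} {n m : ℕ} (hWU : W ⊆ U)
    (hWV : f^[n] '' W ⊆ V) (hm : m ∈ Nplus f W W) : n + m ∈ Nplus f U V := by
  obtain ⟨_, ⟨a, ha, rfl⟩, hfa⟩ := hm
  refine ⟨f^[n + m] a, ⟨a, hWU ha, rfl⟩, ?_⟩
  rw [iterate_add_apply]
  exact hWV (mem_image_of_mem _ hfa)

section

variable {X : Type*} [TopologicalSpace X] {f : X → X}

theorem PerfectPhase.nhdsNE_neBot (hperf : PerfectPhase X) (x : X) : (𝓝[≠] x).NeBot :=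
  Filter.neBot_iff.mpr fun h => hperf x ((isOpen_singleton_iff_punctured_nhds x).mpr h)

theorem PerfectPhase.exists_disjoint_open_subsets [T2Space X] (hperf : PerfectPhase X)
    {W : Set X} (hW : IsOpen W) (hWne : W.Nonempty) :
    ∃ A B : Set X, IsOpen A ∧ A.Nonempty ∧ A ⊆ W ∧ IsOpen B ∧ B.Nonempty ∧ B ⊆ W ∧
      Disjoint A B := by
  obtain ⟨x, hx⟩ := hWne
  obtain ⟨y, hy, hyx⟩ : ∃ y ∈ W, y ≠ x := by
    by_contra! h
    exact hperf x (eq_singleton_iff_unique_mem.mpr ⟨hx, h⟩ ▸ hW)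
  obtain ⟨U, V, hU, hV, hxU, hyV, hUV⟩ := t2_separation hyx.symm
  exact ⟨W ∩ U, W ∩ V, hW.inter hU, ⟨x, hx, hxU⟩, inter_subset_left,
    hW.inter hV, ⟨y, hy, hyV⟩, inter_subset_left,
    hUV.mono inter_subset_right inter_subset_right⟩

theorem exists_open_image_subset_of_mem_Nplus {n : ℕ} (hqc : QuasiCont f^[n])
    {U V : Set X} (hU : IsOpen U) (hV : IsOpen V) (hn : n ∈ Nplus f U V) :
    ∃ W : Set X, IsOpen W ∧ W.Nonempty ∧ W ⊆ U ∧ f^[n] '' W ⊆ V := by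
  obtain ⟨_, ⟨x, hx, rfl⟩, hxV⟩ := hn
  exact hqc x V hV hxV U hU hx

theorem TTplus.ttProp (htt : TTplus f) : TTprop f :=
  fun U V hU hUne hV hVne => (htt U V hU hUne hV hVne).mono subset_union_left

namespace TTprop

variable [T2Space X] (hperf : PerfectPhase X) (htt : TTprop f)
include hperf htt

theorem exists_pos_mem_Nplus_self {W : Set X} (hW : IsOpen W) (hWne : W.Nonempty) :
    ∃ k, 0 < k ∧ k ∈ Nplus f W W := by
  obtain ⟨A, B, hA, hAne, hAW, hB, hBne, hBW, hAB⟩ :=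
    hperf.exists_disjoint_open_subsets hW hWne
  obtain ⟨k, hk⟩ := htt A B hA hAne hB hBne
  have hW_mono : Nplus f A B ∪ Nplus f B A ⊆ Nplus f W W := by
    rintro n (⟨y, hy, hyB⟩ | ⟨y, hy, hyA⟩)
    · exact ⟨y, image_mono hAW hy, hBW hyB⟩
    · exact ⟨y, image_mono hBW hy, hAW hyA⟩
  have hk_ne : k ≠ 0 := by
    rintro rfl
    rcases hk with ⟨y, hy, hyB⟩ | ⟨y, hy, hyA⟩
    · exact hAB.ne_of_mem (by simpa using hy) hyB rfl
    · exact hAB.ne_of_mem hyA (by simpa using hy) rfl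
  exact ⟨k, Nat.pos_of_ne_zero hk_ne, hW_mono hk⟩

variable (hqc : ∀ n : ℕ, QuasiCont (f^[n]))
include hqc

theorem exists_ge_mem_Nplus_self (N : ℕ) {W : Set X} (hW : IsOpen W) (hWne : W.Nonempty) :
    ∃ m ≥ N, m ∈ Nplus f W W := by
  induction N generalizing W with
  | zero => exact ⟨0, le_rfl, by simpa [Nplus] using hWne⟩
  | succ N ih =>
    obtain ⟨k, hk, hkW⟩ := exists_pos_mem_Nplus_self hperf htt hW hWne
    obtain ⟨V, hV, hVne, hVW, hkV⟩ := exists_open_image_subset_of_mem_Nplus (hqc k) hW hW hkW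
    obtain ⟨m, hm, hmV⟩ := ih hV hVne
    exact ⟨k + m, by omega, add_mem_Nplus hVW hkV hmV⟩

theorem ttPlus : TTplus f := by
  intro U V hU hUne hV hVne
  obtain ⟨k, hk | hk⟩ := htt U V hU hUne hV hVne
  · exact ⟨k, hk⟩
  obtain ⟨W, hW, hWne, hWV, hkW⟩ := exists_open_image_subset_of_mem_Nplus (hqc k) hV hU hk
  -- a return time `m ≥ k` of `W` turns the visit `V → U` at time `k` into `U → V` at `m - k`
  obtain ⟨m, hm, _, ⟨a, ha, rfl⟩, hmW⟩ := exists_ge_mem_Nplus_self hperf htt hqc k hW hWne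
  refine ⟨m - k, f^[m - k] (f^[k] a), ⟨f^[k] a, hkW (mem_image_of_mem _ ha), rfl⟩, ?_⟩
  rw [← iterate_add_apply, Nat.sub_add_cancel hm]
  exact hWV hmW

theorem Nplus_infinite {U V : Set X} (hU : IsOpen U) (hUne : U.Nonempty) (hV : IsOpen V)
    (hVne : V.Nonempty) : (Nplus f U V).Infinite := by
  obtain ⟨n, hn⟩ := ttPlus hperf htt hqc U V hU hUne hV hVne
  obtain ⟨W, hW, hWne, hWU, hnW⟩ := exists_open_image_subset_of_mem_Nplus (hqc n) hU hV hn
  refine infinite_of_forall_exists_gt fun N => ?_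
  obtain ⟨m, hm, hmW⟩ := exists_ge_mem_Nplus_self hperf htt hqc (N + 1) hW hWne
  exact ⟨n + m, add_mem_Nplus hWU hnW hmW, by omega⟩

end TTprop

theorem TTplus.dense_iUnion_interior_preimage (htt : TTplus f)
    (hqc : ∀ n : ℕ, QuasiCont (f^[n])) {V : Set X} (hV : IsOpen V) (hVne : V.Nonempty) :
    Dense (⋃ m : ℕ, interior (f^[m] ⁻¹' V)) := by
  refine dense_iff_inter_open.mpr fun U hU hUne => ?_
  obtain ⟨n, hn⟩ := htt U V hU hUne hV hVne
  obtain ⟨W, hW, ⟨a, ha⟩, hWU, hnW⟩ :=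
    exists_open_image_subset_of_mem_Nplus (hqc n) hU hV hn
  exact ⟨a, hWU ha, mem_iUnion.mpr ⟨n, interior_maximal (image_subset_iff.mp hnW) hW ha⟩⟩

theorem TTplus.exists_dense_orbit [BaireSpace X] (htt : TTplus f) (hpibase : CountablePiBase X)
    (hqc : ∀ n : ℕ, QuasiCont (f^[n])) : ∃ x : X, Dense (range fun n : ℕ => f^[n] x) := by
  obtain ⟨P, hP, hPbase⟩ := hpibase
  have : Nonempty X := (hP 0).2.to_subtype.map Subtype.val
  have hdense : Dense (⋂ k, ⋃ m : ℕ, interior (f^[m] ⁻¹' P k)) :=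
    dense_iInter_of_isOpen (fun _ => isOpen_iUnion fun _ => isOpen_interior)
      fun k => htt.dense_iUnion_interior_preimage hqc (hP k).1 (hP k).2
  obtain ⟨x, hx⟩ := hdense.nonempty
  refine ⟨x, dense_iff_inter_open.mpr fun W hW hWne => ?_⟩
  obtain ⟨k, hk⟩ := hPbase W hW hWne
  obtain ⟨m, hm⟩ := mem_iUnion.mp (mem_iInter.mp hx k)
  exact ⟨f^[m] x, hk (interior_subset hm : x ∈ f^[m] ⁻¹' P k), m, rfl⟩

theorem omegaLimitSet_eq_univ_iff {x : X} :
    omegaLimitSet f x = univ ↔ ∀ k : ℕ, Dense {y : X | ∃ n ≥ k, f^[n] x = y} := by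
  simp only [omegaLimitSet, eq_univ_iff_forall, mem_iInter, Dense]
  exact forall_comm

theorem omegaLimitSet_eq_univ_of_dense_orbit [T1Space X] (hperf : PerfectPhase X) {x : X}
    (hx : Dense (range fun n : ℕ => f^[n] x)) : omegaLimitSet f x = univ := by
  have := hperf.nhdsNE_neBot
  refine omegaLimitSet_eq_univ_iff.mpr fun k => ?_
  refine (hx.sdiff_finite ((finite_Iio k).image fun n => f^[n] x)).mono ?_
  rintro _ ⟨⟨n, rfl⟩, hn⟩
  exact ⟨n, not_lt.mp fun hnk => hn ⟨n, hnk, rfl⟩, rfl⟩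

theorem ttPlus_of_omegaLimitSet_eq_univ {x : X} (hx : omegaLimitSet f x = univ) : TTplus f := by
  intro U V hU hUne hV hVne
  have htail := omegaLimitSet_eq_univ_iff.mp hx
  obtain ⟨_, hiU, i, -, rfl⟩ := (htail 0).inter_open_nonempty U hU hUne
  obtain ⟨_, hjV, j, hji, rfl⟩ := (htail i).inter_open_nonempty V hV hVne
  refine ⟨j - i, f^[j] x, ⟨f^[i] x, hiU, ?_⟩, hjV⟩
  rw [← iterate_add_apply, Nat.sub_add_cancel hji]

end

theorem equivalence_theorem {X : Type*} [TopologicalSpace X] [T2Space X] [BaireSpace X]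
    (f : X → X) (hperf : PerfectPhase X)
    (hpibase : CountablePiBase X)
    (hqc : ∀ n : ℕ, QuasiCont (f^[n])) :
    [ TTprop f,
      (∀ U V : Set X, IsOpen U → U.Nonempty → IsOpen V → V.Nonempty →
        (Nplus f U V).Infinite),
      (∃ x : X, Dense (Set.range fun n : ℕ => f^[n] x)),
      (∃ x : X, omegaLimitSet f x = Set.univ) ].TFAE := by
  tfae_have 1 → 2 := fun htt _ _ hU hUne hV hVne =>
    htt.Nplus_infinite hperf hqc hU hUne hV hVne
  tfae_have 2 → 1 := fun hinf => TTplus.ttProp fun U V hU hUne hV hVne =>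
    (hinf U V hU hUne hV hVne).nonempty
  tfae_have 1 → 3 := fun htt => (htt.ttPlus hperf hqc).exists_dense_orbit hpibase hqc
  tfae_have 3 → 4 := fun ⟨x, hx⟩ => ⟨x, omegaLimitSet_eq_univ_of_dense_orbit hperf hx⟩
  tfae_have 4 → 1 := fun ⟨_, hx⟩ => (ttPlus_of_omegaLimitSet_eq_univ hx).ttProp
  tfae_finish
end

section
/- Let (X,f) be a dynamical system where f is quasi-continuous and δ-open, and X is fragmented by a metric ρ whose topology contains that of X. Then C^∞_f = {x ∈ X : fⁿ(x) ∈ C(f) for all n ∈ ℕ} is a residual subset of X, where C(f) is the set of continuity points of f. -/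
open Set Function Topology

/-! For `ε > 0`, the points where `f` oscillates by at least `ε` in the metric form a closed set,
and it has empty interior: fragmentability gives a relatively open piece of small diameter of
the image of that interior, and quasi-continuity gives a nonempty open set mapped into it. Since
the metric topology is finer, every discontinuity point of `f` lies in one of countably many such
nowhere dense sets, so the discontinuity set is meagre; δ-openness pulls meagre sets back to meagre
sets along every iterate `f^[n]`. -/

section Oscillation

variable {X Y : Type*} [TopologicalSpace X]

def oscillationAtLeast (d : Y → Y → ℝ) (f : X → Y) (ε : ℝ) : Set X :=
  {x | ∀ U : Set X, IsOpen U → x ∈ U → ∃ y ∈ U, ∃ z ∈ U, ε ≤ d (f y) (f z)}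

variable {d : Y → Y → ℝ} {f : X → Y} {ε : ℝ}

lemma isClosed_oscillationAtLeast : IsClosed (oscillationAtLeast d f ε) := by
  rw [← isOpen_compl_iff, isOpen_iff_forall_mem_open]
  intro x hx
  simp only [oscillationAtLeast, mem_compl_iff, mem_ofPred_eq, not_forall, not_exists, not_and,
    not_le] at hx
  obtain ⟨U, hU, hxU, hsmall⟩ := hx
  refine ⟨U, fun x' hx' hosc => ?_, hU, hxU⟩
  obtain ⟨y, hy, z, hz, hyz⟩ := hosc U hU hx'
  exact (hsmall y hy z hz).not_ge hyz

variable [TopologicalSpace Y]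

def IsFragmentedBy (d : Y → Y → ℝ) : Prop :=
  ∀ ε > (0 : ℝ), ∀ A : Set Y, A.Nonempty →
    ∃ B : Set Y, B.Nonempty ∧ (∃ O : Set Y, IsOpen O ∧ B = A ∩ O) ∧ ∀ x ∈ B, ∀ y ∈ B, d x y < ε

lemma interior_oscillationAtLeast_eq_empty (hqc : QuasiCont f) (hfrag : IsFragmentedBy d)
    (hε : 0 < ε) : interior (oscillationAtLeast d f ε) = ∅ := by
  by_contra hne
  obtain ⟨x, hx⟩ := nonempty_iff_ne_empty.mpr hne
  obtain ⟨B, ⟨_, hb⟩, ⟨O, hO, rfl⟩, hsmall⟩ :=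
    hfrag ε hε (f '' interior (oscillationAtLeast d f ε)) ⟨f x, mem_image_of_mem f hx⟩
  obtain ⟨⟨x₀, hx₀, rfl⟩, hx₀O⟩ := hb
  obtain ⟨V, hV, ⟨v, hv⟩, hVint, hfV⟩ := hqc x₀ O hO hx₀O _ isOpen_interior hx₀
  obtain ⟨y, hy, z, hz, hyz⟩ := interior_subset (hVint hv) V hV hv
  have hmem : ∀ w ∈ V, f w ∈ f '' interior (oscillationAtLeast d f ε) ∩ O :=
    fun w hw => ⟨mem_image_of_mem f (hVint hw), hfV (mem_image_of_mem f hw)⟩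
  exact (hsmall _ (hmem y hy) _ (hmem z hz)).not_ge hyz

lemma isNowhereDense_oscillationAtLeast (hqc : QuasiCont f) (hfrag : IsFragmentedBy d)
    (hε : 0 < ε) : IsNowhereDense (oscillationAtLeast d f ε) :=
  isClosed_oscillationAtLeast.isNowhereDense_iff.mpr
    (interior_oscillationAtLeast_eq_empty hqc hfrag hε)

lemma continuousAt_of_forall_notMem_oscillationAtLeast (m : PseudoMetricSpace Y)
    (hfiner : ∀ W : Set Y, IsOpen W → IsOpen[m.toUniformSpace.toTopologicalSpace] W) {x : X}
    (hx : ∀ k : ℕ, x ∉ oscillationAtLeast m.dist f (1 / (k + 1))) : ContinuousAt f x := by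
  refine fun W hW => ?_
  obtain ⟨W', hW'W, hW', hxW'⟩ := mem_nhds_iff.mp hW
  obtain ⟨δ, hδ, hball⟩ := (@Metric.isOpen_iff Y m W').mp (hfiner W' hW') (f x) hxW'
  obtain ⟨k, hk⟩ := exists_nat_one_div_lt hδ
  have hxk := hx k
  simp only [oscillationAtLeast, mem_ofPred_eq, not_forall, not_exists, not_and, not_le] at hxk
  obtain ⟨U, hU, hxU, hsmall⟩ := hxk
  exact Filter.mem_map.mpr <| Filter.mem_of_superset (hU.mem_nhds hxU) fun y hy =>
    hW'W (hball ((hsmall y hy x hxU).trans hk))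

lemma isMeagre_setOf_not_continuousAt (m : PseudoMetricSpace Y)
    (hfiner : ∀ W : Set Y, IsOpen W → IsOpen[m.toUniformSpace.toTopologicalSpace] W)
    (hfrag : IsFragmentedBy m.dist) (hqc : QuasiCont f) :
    IsMeagre {x | ¬ ContinuousAt f x} := by
  have hcover : {x | ¬ ContinuousAt f x} ⊆ ⋃ k : ℕ, oscillationAtLeast m.dist f (1 / (k + 1)) := by
    intro x hx
    by_contra hnot
    simp only [mem_iUnion, not_exists] at hnot
    exact hx (continuousAt_of_forall_notMem_oscillationAtLeast m hfiner hnot)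
  exact (isMeagre_iUnion fun k =>
    (isNowhereDense_oscillationAtLeast hqc hfrag (by positivity)).isMeagre).mono hcover

end Oscillation

section DeltaOpen

variable {X Y Z : Type*} [TopologicalSpace X] [TopologicalSpace Y] [TopologicalSpace Z]

def IsDeltaOpen (g : X → Y) : Prop :=
  ∀ N : Set Y, IsNowhereDense N → IsNowhereDense (g ⁻¹' N)

lemma IsDeltaOpen.comp {g : Y → Z} {h : X → Y} (hg : IsDeltaOpen g) (hh : IsDeltaOpen h) :
    IsDeltaOpen (g ∘ h) :=
  fun N hN => hh _ (hg N hN)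

lemma IsDeltaOpen.iterate {g : X → X} (hg : IsDeltaOpen g) (n : ℕ) : IsDeltaOpen g^[n] := by
  induction n with
  | zero => exact fun N hN => hN
  | succ n ih => rw [iterate_succ']; exact hg.comp ih

lemma IsDeltaOpen.isMeagre_preimage {g : X → Y} (hg : IsDeltaOpen g) {s : Set Y}
    (hs : IsMeagre s) : IsMeagre (g ⁻¹' s) := by
  obtain ⟨S, hS, hSc, hsS⟩ := isMeagre_iff_countable_union_isNowhereDense.mp hs
  refine isMeagre_iff_countable_union_isNowhereDense.mpr
    ⟨preimage g '' S, forall_mem_image.mpr fun N hN => hg N (hS N hN), hSc.image _, ?_⟩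
  rw [sUnion_image, ← preimage_iUnion₂, ← sUnion_eq_biUnion]
  exact preimage_mono hsS

end DeltaOpen

theorem Cinftyf_residual {X : Type*} [t : TopologicalSpace X] (f : X → X)
    (m : MetricSpace X)
    (hfiner : ∀ U : Set X, IsOpen[t] U → IsOpen[m.toUniformSpace.toTopologicalSpace] U)
    (hfrag : ∀ ε > (0 : ℝ), ∀ A : Set X, A.Nonempty →
      ∃ B : Set X, B.Nonempty ∧ (∃ O : Set X, IsOpen[t] O ∧ B = A ∩ O) ∧
        ∀ x ∈ B, ∀ y ∈ B, m.dist x y < ε)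
    (hqc : QuasiCont f)
    (hdelta : ∀ N : Set X, IsNowhereDense N → IsNowhereDense (f ⁻¹' N)) :
    IsMeagre {x : X | ∀ n : ℕ, ContinuousAt f (f^[n] x)}ᶜ := by
  have hdisc : IsMeagre {x | ¬ ContinuousAt f x} :=
    isMeagre_setOf_not_continuousAt m.toPseudoMetricSpace hfiner hfrag hqc
  have hδ : IsDeltaOpen f := hdelta
  have hcompl : {x : X | ∀ n : ℕ, ContinuousAt f (f^[n] x)}ᶜ =
      ⋃ n : ℕ, f^[n] ⁻¹' {x | ¬ ContinuousAt f x} := by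
    ext x
    simp
  rw [hcompl]
  exact isMeagre_iUnion fun n => (hδ.iterate n).isMeagre_preimage hdisc
end

section
/- Let (X,f) be a dynamical system on a Hausdorff space X with fⁿ quasi-continuous for all n ∈ ℕ, satisfying TT. If x is an isolated point of X with |f⁻¹(x)| > 1, then x is a periodic point of f, |f⁻¹(x)| = 2, and f⁻¹(x) consists entirely of isolated points. -/
/-!
Let `A = f⁻¹{x}`. Quasi-continuity of `f` at the points of `A` gives `A ⊆ cl (int A)`. Given two
distinct points of `A`, TT applied to disjoint open subsets of `int A` near them produces
`n ∈ N₊(V, V')` with `V, V' ⊆ A`; as `f V = {x}`, this forces `fⁿ⁻¹(x) ∈ V' ⊆ A`, so the orbit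
of `x` returns to `x`, and it does so through a point of any open set containing both points.
Hence `x` is periodic, and since its finite orbit `O` is closed, `A \ O` has at most one point;
`A ∩ O` has at most one point as well, so `|A| = 2`. A finite set contained in the closure of its
interior is discrete.
-/

open Set Function Topology

theorem QuasiCont.preimage_subset_closure_interior_preimage {X Y : Type*} [TopologicalSpace X]
    [TopologicalSpace Y] {f : X → Y} (hf : QuasiCont f) {W : Set Y} (hW : IsOpen W) :
    f ⁻¹' W ⊆ closure (interior (f ⁻¹' W)) := by
  intro y hy
  rw [mem_closure_iff]
  intro U hU hyU
  obtain ⟨V, hVo, ⟨v, hv⟩, hVU, hVW⟩ := hf y W hW hy U hU hyU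
  have hV : V ⊆ f ⁻¹' W := image_subset_iff.mp hVW
  exact ⟨v, hVU hv, hVo.subset_interior_iff.mpr hV hv⟩

theorem isOpen_singleton_of_finite_of_subset_closure_interior {X : Type*} [TopologicalSpace X]
    [T1Space X] {A : Set X} (hfin : A.Finite) (hA : A ⊆ closure (interior A)) {y : X}
    (hy : y ∈ A) : IsOpen ({y} : Set X) := by
  have hclosed : IsClosed (A \ {y}) := (hfin.sdiff (t := {y})).isClosed
  have hsub : interior A \ (A \ {y}) ⊆ {y} := fun p ⟨hpA, hpy⟩ =>
    by_contra fun hp => hpy ⟨interior_subset hpA, hp⟩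
  have hne : (interior A \ (A \ {y})).Nonempty := by
    obtain ⟨p, hp, hpA⟩ := mem_closure_iff.mp (hA hy) _ hclosed.isOpen_compl fun h => h.2 rfl
    exact ⟨p, hpA, hp⟩
  rw [← hne.subset_singleton_iff.mp hsub]
  exact isOpen_interior.sdiff hclosed

section Dynamics

variable {X : Type*} {f : X → X} {x : X}

theorem IsPeriodicPt.finite_range_iterate {n : ℕ} (h : IsPeriodicPt f n x) (hn : 0 < n) :
    (range fun m => f^[m] x).Finite :=
  ((finite_Iio n).image fun m => f^[m] x).subset <| by
    rintro _ ⟨m, rfl⟩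
    exact ⟨m % n, Nat.mod_lt m hn, h.iterate_mod_apply m⟩

theorem subsingleton_preimage_singleton_inter_range_iterate (f : X → X) (x : X) :
    (f ⁻¹' {x} ∩ range fun m => f^[m] x).Subsingleton := by
  rintro _ ⟨hn, n, rfl⟩ _ ⟨hm, m, rfl⟩
  replace hn : f^[n + 1] x = x := (iterate_succ_apply' f n x).trans hn
  replace hm : f^[m + 1] x = x := (iterate_succ_apply' f m x).trans hm
  calc f^[n] x = f^[n] (f^[m + 1] x) := by rw [hm]
    _ = f^[m] (f^[n + 1] x) := by
      rw [← iterate_add_apply, ← iterate_add_apply, show n + (m + 1) = m + (n + 1) by omega]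
    _ = f^[m] x := by rw [hn]

theorem exists_iterate_mem_of_mem_Nplus {V V' : Set X} (hV : V ⊆ f ⁻¹' {x})
    (hdisj : Disjoint V V') {n : ℕ} (hn : n ∈ Nplus f V V') : ∃ m, f^[m] x ∈ V' := by
  obtain ⟨_, ⟨v, hv, rfl⟩, hv'⟩ := hn
  cases n with
  | zero => exact absurd hv' (hdisj.notMem_of_mem_left hv)
  | succ m =>
    refine ⟨m, ?_⟩
    rwa [iterate_succ_apply, show f v = x from hV hv] at hv'

variable [TopologicalSpace X]

theorem TTprop.exists_iterate_mem_preimage_inter [T2Space X] (hTT : TTprop f)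
    (hA : f ⁻¹' {x} ⊆ closure (interior (f ⁻¹' {x}))) {a b : X} (ha : a ∈ f ⁻¹' {x})
    (hb : b ∈ f ⁻¹' {x}) (hab : a ≠ b) {U : Set X} (hU : IsOpen U) (haU : a ∈ U)
    (hbU : b ∈ U) : ∃ m, f^[m] x ∈ f ⁻¹' {x} ∩ U := by
  obtain ⟨W₁, W₂, hW₁, hW₂, haW, hbW, hW⟩ := t2_separation hab
  set V₁ := W₁ ∩ U ∩ interior (f ⁻¹' {x})
  set V₂ := W₂ ∩ U ∩ interior (f ⁻¹' {x})
  have hV₁ : IsOpen V₁ := (hW₁.inter hU).inter isOpen_interior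
  have hV₂ : IsOpen V₂ := (hW₂.inter hU).inter isOpen_interior
  have hVA : ∀ W, W ∩ U ∩ interior (f ⁻¹' {x}) ⊆ f ⁻¹' {x} ∩ U :=
    fun W p hp => ⟨interior_subset hp.2, hp.1.2⟩
  have hdisj : Disjoint V₁ V₂ := hW.mono (inter_subset_left.trans inter_subset_left)
    (inter_subset_left.trans inter_subset_left)
  obtain ⟨n, hn | hn⟩ := hTT V₁ V₂ hV₁ (mem_closure_iff.mp (hA ha) _ (hW₁.inter hU) ⟨haW, haU⟩)
    hV₂ (mem_closure_iff.mp (hA hb) _ (hW₂.inter hU) ⟨hbW, hbU⟩)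
  · obtain ⟨m, hm⟩ := exists_iterate_mem_of_mem_Nplus ((hVA W₁).trans inter_subset_left) hdisj hn
    exact ⟨m, hVA W₂ hm⟩
  · obtain ⟨m, hm⟩ :=
      exists_iterate_mem_of_mem_Nplus ((hVA W₂).trans inter_subset_left) hdisj.symm hn
    exact ⟨m, hVA W₁ hm⟩

end Dynamics

theorem isolated_point_large_preimage {X : Type*} [TopologicalSpace X] [T2Space X]
    (f : X → X)
    (hqc : ∀ n : ℕ, QuasiCont (f^[n]))
    (hTT : TTprop f)
    (x : X) (hx : IsOpen ({x} : Set X))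
    (hcard : (f ⁻¹' {x}).Nontrivial) :
    (∃ k : ℕ, 0 < k ∧ f^[k] x = x) ∧
      (f ⁻¹' {x}).ncard = 2 ∧
      ∀ y ∈ f ⁻¹' {x}, IsOpen ({y} : Set X) := by
  set A := f ⁻¹' {x}
  have hA : A ⊆ closure (interior A) :=
    (iterate_one f ▸ hqc 1).preimage_subset_closure_interior_preimage hx
  obtain ⟨a, ha, b, hb, hab⟩ := hcard
  obtain ⟨m, hm, -⟩ :=
    hTT.exists_iterate_mem_preimage_inter hA ha hb hab isOpen_univ trivial trivial
  have hper : IsPeriodicPt f (m + 1) x := (iterate_succ_apply' f m x).trans hm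
  set O := range fun n => f^[n] x
  have hAO : (A ∩ O).Subsingleton := subsingleton_preimage_singleton_inter_range_iterate f x
  have hAdiffO : (A \ O).Subsingleton := fun p hp q hq => by_contra fun hpq => by
    obtain ⟨n, -, hn⟩ := hTT.exists_iterate_mem_preimage_inter hA hp.1 hq.1 hpq
      (IsPeriodicPt.finite_range_iterate hper m.succ_pos).isClosed.isOpen_compl hp.2 hq.2
    exact hn (mem_range_self n)
  have hfin : A.Finite := inter_union_sdiff A O ▸ hAO.finite.union hAdiffO.finite
  refine ⟨⟨m + 1, m.succ_pos, hper⟩, le_antisymm ?_ ?_, fun y hy =>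
    isOpen_singleton_of_finite_of_subset_closure_interior hfin hA hy⟩
  · calc A.ncard = (A ∩ O ∪ A \ O).ncard := by rw [inter_union_sdiff]
      _ ≤ (A ∩ O).ncard + (A \ O).ncard := ncard_union_le _ _
      _ ≤ 1 + 1 := add_le_add ((ncard_le_one hAO.finite).mpr hAO)
          ((ncard_le_one hAdiffO.finite).mpr hAdiffO)
  · exact one_lt_ncard_iff_nontrivial_and_finite.mpr ⟨⟨a, ha, b, hb, hab⟩, hfin⟩
end

section
/- Let (X,f) be a dynamical system on a Hausdorff space X with fⁿ quasi-continuous for all n ∈ ℕ, satisfying TT. Then there is at most one isolated point x ∈ X with |f⁻¹(x)| = 2. -/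
/-!
Each of two isolated points with exactly two preimages has isolated preimages (quasi-continuity),
and TT between these two preimages makes the point periodic. Since `f` is injective on periodic
points, each of them has a non-periodic isolated preimage. TT between the two non-periodic
preimages `w ≠ w'` yields `fⁿ w = w'` with `n > 0` (or the reverse), so `w'` lies on the orbit of
the periodic point `f w` and would be periodic.
-/

open Set Function Topology

lemma QuasiCont.isOpen_singleton_of_apply_eq {X Y : Type*} [TopologicalSpace X] [T1Space X]
    [TopologicalSpace Y] {f : X → Y} (hf : QuasiCont f) {x : Y} (hx : IsOpen ({x} : Set Y))
    (hfin : (f ⁻¹' {x}).Finite) {a : X} (ha : f a = x) : IsOpen ({a} : Set X) := by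
  have hU : IsOpen (f ⁻¹' {x} \ {a})ᶜ := hfin.sdiff.isClosed.isOpen_compl
  obtain ⟨V, hV, hVne, hVU, hfV⟩ := hf a {x} hx ha _ hU (by simp)
  have hVa : V ⊆ {a} := fun v hv => by
    by_contra hva
    exact hVU hv ⟨hfV (mem_image_of_mem f hv), hva⟩
  rwa [(hVne.subset_singleton_iff).mp hVa] at hV

namespace TTprop

variable {X : Type*} [TopologicalSpace X] {f : X → X}

lemma exists_iterate_eq (hTT : TTprop f) {u v : X} (hu : IsOpen ({u} : Set X))
    (hv : IsOpen ({v} : Set X)) (huv : u ≠ v) :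
    ∃ n, 0 < n ∧ (f^[n] u = v ∨ f^[n] v = u) := by
  obtain ⟨n, hn⟩ := hTT {u} {v} hu (singleton_nonempty u) hv (singleton_nonempty v)
  simp only [Nplus, mem_union, mem_ofPred_eq, image_singleton, singleton_inter_nonempty,
    mem_singleton_iff] at hn
  refine ⟨n, Nat.pos_of_ne_zero fun hn0 => ?_, hn⟩
  subst hn0
  exact huv (hn.elim id Eq.symm)

lemma mem_periodicPts_of_apply_eq (hTT : TTprop f) {a b x : X} (ha : IsOpen ({a} : Set X))
    (hb : IsOpen ({b} : Set X)) (hab : a ≠ b) (hfa : f a = x) (hfb : f b = x) :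
    x ∈ periodicPts f := by
  obtain ⟨n, hn, h⟩ := hTT.exists_iterate_eq ha hb hab
  have periodic_of {c d : X} (hfc : f c = x) (hfd : f d = x) (hcd : f^[n] c = d) :
      IsPeriodicPt f n x := by
    rw [IsPeriodicPt, IsFixedPt, ← hfc, ← iterate_succ_apply, iterate_succ_apply', hcd, hfd, hfc]
  exact mk_mem_periodicPts hn (h.elim (periodic_of hfa hfb) (periodic_of hfb hfa))

lemma eq_of_notMem_periodicPts (hTT : TTprop f) {w w' : X} (hw : IsOpen ({w} : Set X))
    (hw' : IsOpen ({w'} : Set X)) (hwp : w ∉ periodicPts f) (hw'p : w' ∉ periodicPts f)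
    (hfw : f w ∈ periodicPts f) (hfw' : f w' ∈ periodicPts f) : w = w' := by
  by_contra hne
  obtain ⟨n, hn, h⟩ := hTT.exists_iterate_eq hw hw' hne
  have iterate_mem {u : X} (hfu : f u ∈ periodicPts f) : f^[n] u ∈ periodicPts f := by
    obtain ⟨k, rfl⟩ := Nat.exists_eq_add_one_of_ne_zero hn.ne'
    exact iterate_succ_apply f k u ▸ (bijOn_periodicPts f).mapsTo.iterate k hfu
  rcases h with h | h
  · exact hw'p (h ▸ iterate_mem hfw)
  · exact hwp (h ▸ iterate_mem hfw')

lemma exists_nonperiodic_preimage [T1Space X] (hTT : TTprop f) (hf : QuasiCont f) {x : X}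
    (hx : IsOpen ({x} : Set X)) (h2 : (f ⁻¹' {x}).ncard = 2) :
    x ∈ periodicPts f ∧ ∃ w, f w = x ∧ IsOpen ({w} : Set X) ∧ w ∉ periodicPts f := by
  obtain ⟨a, b, hab, hpre⟩ := ncard_eq_two.mp h2
  have hfin : (f ⁻¹' {x}).Finite := hpre ▸ toFinite {a, b}
  have hfa : f a = x := show a ∈ f ⁻¹' {x} from hpre ▸ mem_insert a {b}
  have hfb : f b = x := show b ∈ f ⁻¹' {x} from hpre ▸ mem_insert_of_mem a rfl
  have ha := hf.isOpen_singleton_of_apply_eq hx hfin hfa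
  have hb := hf.isOpen_singleton_of_apply_eq hx hfin hfb
  refine ⟨hTT.mem_periodicPts_of_apply_eq ha hb hab hfa hfb, ?_⟩
  by_contra! hper
  exact hab ((bijOn_periodicPts f).injOn (hper a hfa ha) (hper b hfb hb) (hfa.trans hfb.symm))

end TTprop

theorem at_most_one_two_preimage {X : Type*} [TopologicalSpace X] [T2Space X]
    (f : X → X)
    (hqc : ∀ n : ℕ, QuasiCont (f^[n]))
    (hTT : TTprop f) :
    ∀ x y : X, IsOpen ({x} : Set X) → IsOpen ({y} : Set X) →
      (f ⁻¹' {x}).ncard = 2 → (f ⁻¹' {y}).ncard = 2 → x = y := by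
  intro x y hx hy h2x h2y
  have hf : QuasiCont f := by simpa using hqc 1
  obtain ⟨hxp, w, rfl, hw, hwp⟩ := hTT.exists_nonperiodic_preimage hf hx h2x
  obtain ⟨hyp, w', rfl, hw', hw'p⟩ := hTT.exists_nonperiodic_preimage hf hy h2y
  rw [hTT.eq_of_notMem_periodicPts hw hw' hwp hw'p hxp hyp]
end

section
/- Let (X,f) be a dynamical system on a Hausdorff space X with isolated points, where fⁿ is quasi-continuous for all n ∈ ℕ, satisfying TT. If there is a point x ∈ Iso_X with f⁻¹(x) = ∅, then x has dense forward orbit and is the unique such point; moreover TT₊ fails, i.e., there exist nonempty open sets U, V with N₊(U,V) = ∅. -/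
/-! An isolated point `x` without preimages can only be reached by the trivial orbit segment:
`f^[n] z = x` forces `n = 0` and `z = x`. Applying TT to `{x}` and an open set `U`, the second
alternative `f^[n] u = x` with `u ∈ U` therefore puts `x` in `U`, so the orbit of `x` meets `U`.
A dense orbit must pass through the open point `x`, hence starts there. Finally nothing outside
`{x}` ever enters `{x}`, so `N₊({x}ᶜ, {x}) = ∅`. -/

open Set Function Topology

section

variable {X : Type*} {f : X → X} {x : X}

theorem iterate_eq_iff_of_preimage_eq_empty (hpre : f ⁻¹' {x} = ∅) {n : ℕ} {z : X} :
    f^[n] z = x ↔ n = 0 ∧ z = x := by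
  rw [preimage_singleton_eq_empty] at hpre
  cases n with
  | zero => simp
  | succ n =>
    rw [iterate_succ_apply']
    exact iff_of_false (fun h => hpre ⟨_, h⟩) (by simp)

theorem nplus_singleton_eq_empty_of_notMem (hpre : f ⁻¹' {x} = ∅) {U : Set X} (hU : x ∉ U) :
    Nplus f U {x} = ∅ := by
  refine eq_empty_of_forall_notMem fun n ⟨_, ⟨z, hz, hzx⟩, hx⟩ => hU ?_
  obtain ⟨-, rfl⟩ := (iterate_eq_iff_of_preimage_eq_empty hpre).1 (hzx.trans hx)
  exact hz

variable [TopologicalSpace X]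

theorem dense_range_iterate_of_preimage_eq_empty (hTT : TTprop f) (hx : IsOpen ({x} : Set X))
    (hpre : f ⁻¹' {x} = ∅) : Dense (range fun n : ℕ => f^[n] x) := by
  refine dense_iff_inter_open.2 fun U hU hUne => ?_
  obtain ⟨n, ⟨_, ⟨_, rfl, rfl⟩, hnU⟩ | ⟨_, ⟨u, huU, rfl⟩, hux⟩⟩ :=
    hTT {x} U hx (singleton_nonempty x) hU hUne
  · exact ⟨_, hnU, n, rfl⟩
  · obtain ⟨-, rfl⟩ := (iterate_eq_iff_of_preimage_eq_empty hpre).1 hux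
    exact ⟨u, huU, 0, rfl⟩

theorem eq_of_dense_range_iterate (hx : IsOpen ({x} : Set X)) (hpre : f ⁻¹' {x} = ∅) {y : X}
    (hy : Dense (range fun n : ℕ => f^[n] y)) : y = x := by
  obtain ⟨_, hnx, n, rfl⟩ := hy.inter_open_nonempty {x} hx (singleton_nonempty x)
  exact ((iterate_eq_iff_of_preimage_eq_empty hpre).1 hnx).2

end

theorem empty_preimage_isolated_case_general {X : Type*} [TopologicalSpace X] [T2Space X]
    (f : X → X)
    (hTT : TTprop f)
    (x : X) (hx : IsOpen ({x} : Set X)) (hpre : f ⁻¹' {x} = ∅) :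
    Dense (Set.range fun n : ℕ => f^[n] x) ∧
      (∀ y : X, Dense (Set.range fun n : ℕ => f^[n] y) → y = x) ∧
      (∃ U V : Set X, IsOpen U ∧ U.Nonempty ∧ IsOpen V ∧ V.Nonempty ∧
        Nplus f U V = ∅) := by
  have hfx : f x ≠ x := fun h => (preimage_singleton_eq_empty.1 hpre) ⟨x, h⟩
  refine ⟨dense_range_iterate_of_preimage_eq_empty hTT hx hpre,
    fun y hy => eq_of_dense_range_iterate hx hpre hy,
    {x}ᶜ, {x}, isOpen_compl_singleton, ⟨f x, hfx⟩, hx, singleton_nonempty x,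
    nplus_singleton_eq_empty_of_notMem hpre (notMem_compl_iff.2 rfl)⟩

theorem empty_preimage_isolated_case {X : Type*} [TopologicalSpace X] [T2Space X]
    (f : X → X)
    (hiso : ∃ z : X, IsOpen ({z} : Set X))
    (hqc : ∀ n : ℕ, QuasiCont (f^[n]))
    (hTT : TTprop f)
    (x : X) (hx : IsOpen ({x} : Set X)) (hpre : f ⁻¹' {x} = ∅) :
    Dense (Set.range fun n : ℕ => f^[n] x) ∧
      (∀ y : X, Dense (Set.range fun n : ℕ => f^[n] y) → y = x) ∧
      (∃ U V : Set X, IsOpen U ∧ U.Nonempty ∧ IsOpen V ∧ V.Nonempty ∧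
        Nplus f U V = ∅) :=
  empty_preimage_isolated_case_general f hTT x hx hpre
end

section
/- Let (X,f) be a dynamical system on a Hausdorff space X with at least one isolated point, where fⁿ is quasi-continuous for all n ∈ ℕ. If (X,f) satisfies TT and every isolated point has exactly one preimage point, and there exists a periodic isolated point, then X equals the (finite) orbit of that periodic point; in particular all of DO₊, TT₊, TT₊₊ and DO₊₊ hold. -/
/-! Quasi-continuity of `f` makes the unique preimage of an isolated point isolated, so walking
backwards around the cycle every point of the periodic orbit `O` of `x` is isolated. Hence every
point of `O` has exactly one preimage, which lies on `O`, so both `O` and its complement are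
forward invariant. `O` is finite, hence closed, and contains the isolated point `x`, so if its
complement were nonempty, `{x}` and `Oᶜ` would be two nonempty open sets violating TT. Thus
`X = O`, and every point of `X` returns to every nonempty open set along an arithmetic
progression of times with the period as difference, which gives DO₊, TT₊, TT₊₊ and DO₊₊. -/

open Set Function Topology

theorem QuasiCont.isOpen_singleton_of_preimage_eq {X Y : Type*} [TopologicalSpace X]
    [TopologicalSpace Y] {f : X → Y} (hf : QuasiCont f) {W : Set Y} (hW : IsOpen W) {w : X}
    (h : f ⁻¹' W = {w}) : IsOpen ({w} : Set X) := by
  have hw : f w ∈ W := show w ∈ f ⁻¹' W from h ▸ rfl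
  obtain ⟨V, hVo, hVne, -, hVW⟩ := hf w W hW hw univ isOpen_univ trivial
  rwa [← hVne.subset_singleton_iff.mp (h ▸ image_subset_iff.mp hVW)]

section UniquePreimages

variable {X : Type*} [TopologicalSpace X] {f : X → X}

theorem isOpen_singleton_of_isOpen_singleton_apply (hf : QuasiCont f)
    (hone : ∀ z : X, IsOpen ({z} : Set X) → ∃! w : X, f w = z) {w : X}
    (hw : IsOpen ({f w} : Set X)) : IsOpen ({w} : Set X) :=
  hf.isOpen_singleton_of_preimage_eq hw <|
    eq_singleton_iff_unique_mem.mpr ⟨rfl, fun _ ha => (hone _ hw).unique ha rfl⟩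

theorem isOpen_singleton_of_isOpen_singleton_iterate (hf : QuasiCont f)
    (hone : ∀ z : X, IsOpen ({z} : Set X) → ∃! w : X, f w = z) :
    ∀ (j : ℕ) {w : X}, IsOpen ({f^[j] w} : Set X) → IsOpen ({w} : Set X)
  | 0, _, hw => hw
  | j + 1, _, hw => isOpen_singleton_of_isOpen_singleton_apply hf hone
      (isOpen_singleton_of_isOpen_singleton_iterate hf hone j hw)

theorem Function.IsPeriodicPt.isOpen_singleton_iterate (hf : QuasiCont f)
    (hone : ∀ z : X, IsOpen ({z} : Set X) → ∃! w : X, f w = z) {k : ℕ} {x : X}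
    (hper : IsPeriodicPt f k x) (hk : 0 < k) (hx : IsOpen ({x} : Set X)) (n : ℕ) :
    IsOpen ({f^[n] x} : Set X) := by
  refine isOpen_singleton_of_isOpen_singleton_iterate hf hone (k * n - n) ?_
  rwa [← iterate_add_apply, Nat.sub_add_cancel (Nat.le_mul_of_pos_left n hk),
    (hper.mul_const n).eq]

end UniquePreimages

theorem mapsTo_compl_of_subset_image {α : Type*} {f : α → α} {S : Set α} (hS : S ⊆ f '' S)
    (hinj : InjOn f (f ⁻¹' S)) : MapsTo f Sᶜ Sᶜ := by
  intro v hv hfv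
  obtain ⟨u, hu, huv⟩ := hS hfv
  exact hv (hinj hfv (show f u ∈ S from huv ▸ hfv) huv.symm ▸ hu)

namespace Function.IsPeriodicPt

variable {α : Type*} {f : α → α} {k : ℕ} {x : α}

theorem finite_range_iterate (hper : IsPeriodicPt f k x) (hk : 0 < k) :
    (range fun n : ℕ => f^[n] x).Finite := by
  refine ((finite_Iio k).image fun j => f^[j] x).subset ?_
  rintro _ ⟨n, rfl⟩
  exact ⟨n % k, Nat.mod_lt n hk, hper.iterate_mod_apply n⟩

theorem range_iterate_subset_image (hper : IsPeriodicPt f k x) (hk : 0 < k) :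
    (range fun n : ℕ => f^[n] x) ⊆ f '' range fun n : ℕ => f^[n] x := by
  rintro _ ⟨m, rfl⟩
  refine ⟨f^[m + k - 1] x, mem_range_self _, ?_⟩
  rw [← iterate_succ_apply' f, Nat.succ_eq_add_one, Nat.sub_add_cancel (by omega),
    iterate_add_apply, hper.eq]

theorem exists_iterate_iterate_eq (hper : IsPeriodicPt f k x) (hk : 0 < k) (l m : ℕ) :
    ∃ j, f^[j] (f^[l] x) = f^[m] x :=
  ⟨m + k * l - l, by
    rw [← iterate_add_apply,
      Nat.sub_add_cancel ((Nat.le_mul_of_pos_left l hk).trans (Nat.le_add_left _ _)),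
      iterate_add_apply, (hper.mul_const l).eq]⟩

theorem infinite_nplus (hper : IsPeriodicPt f k x) (hk : 0 < k) {A B : Set α} (hA : x ∈ A)
    {j : ℕ} (hB : f^[j] x ∈ B) : (Nplus f A B).Infinite := by
  refine infinite_of_injective_forall_mem (f := fun t : ℕ => j + k * t) ?_ fun t => ?_
  · intro s t hst
    exact Nat.eq_of_mul_eq_mul_left hk (Nat.add_left_cancel hst)
  · refine ⟨f^[j] x, ⟨x, hA, ?_⟩, hB⟩
    rw [iterate_add_apply, (hper.mul_const t).eq]

theorem range_iterate_subset_omegaLimitSet [TopologicalSpace α] (hper : IsPeriodicPt f k x)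
    (hk : 0 < k) : (range fun n : ℕ => f^[n] x) ⊆ omegaLimitSet f x := by
  rintro _ ⟨m, rfl⟩
  refine mem_iInter.mpr fun κ => subset_closure
    ⟨m + k * κ, (Nat.le_mul_of_pos_left κ hk).trans (Nat.le_add_left _ _), ?_⟩
  rw [iterate_add_apply, (hper.mul_const κ).eq]

end Function.IsPeriodicPt

theorem TTprop.eq_univ_of_mapsTo {X : Type*} [TopologicalSpace X] {f : X → X} (hTT : TTprop f)
    {S : Set X} (hS : IsClosed S) (hint : (interior S).Nonempty) (hmaps : MapsTo f S S)
    (hmaps_compl : MapsTo f Sᶜ Sᶜ) : S = univ := by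
  by_contra hne
  obtain ⟨n, hn | hn⟩ := hTT _ _ isOpen_interior hint hS.isOpen_compl (nonempty_compl.mpr hne)
  · obtain ⟨_, ⟨u, hu, rfl⟩, hv⟩ := hn
    exact hv (hmaps.iterate n (interior_subset hu))
  · obtain ⟨_, ⟨v, hv, rfl⟩, hu⟩ := hn
    exact hmaps_compl.iterate n hv (interior_subset hu)

theorem periodic_isolated_case_general {X : Type*} [TopologicalSpace X] [T2Space X]
    (f : X → X)
    (hqc : ∀ n : ℕ, QuasiCont (f^[n]))
    (hTT : TTprop f)
    (hone : ∀ z : X, IsOpen ({z} : Set X) → ∃! w : X, f w = z)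
    (x : X) (hx : IsOpen ({x} : Set X)) (hper : ∃ k : ℕ, 0 < k ∧ f^[k] x = x) :
    (Set.range fun n : ℕ => f^[n] x).Finite ∧
      (Set.range fun n : ℕ => f^[n] x) = Set.univ ∧
      (∃ y : X, Dense (Set.range fun n : ℕ => f^[n] y)) ∧
      TTplus f ∧
      (∀ U V : Set X, IsOpen U → U.Nonempty → IsOpen V → V.Nonempty →
        (Nplus f U V).Infinite) ∧
      (∃ y : X, omegaLimitSet f y = Set.univ) := by
  obtain ⟨k, hk, hkx⟩ := hper
  have hper : IsPeriodicPt f k x := hkx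
  have hf : QuasiCont f := by simpa using hqc 1
  have hfin := hper.finite_range_iterate hk
  have hinj : InjOn f (f ⁻¹' range fun n : ℕ => f^[n] x) := by
    rintro a ⟨n, hn⟩ b - hab
    exact (hone _ (hn ▸ hper.isOpen_singleton_iterate hf hone hk hx n)).unique rfl hab.symm
  have hint : x ∈ interior (range fun n : ℕ => f^[n] x) :=
    mem_interior.mpr ⟨{x}, singleton_subset_iff.mpr ⟨0, rfl⟩, hx, rfl⟩
  have hmaps : MapsTo f (range fun n : ℕ => f^[n] x) (range fun n : ℕ => f^[n] x) := by
    rintro _ ⟨n, rfl⟩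
    exact ⟨n + 1, iterate_succ_apply' f n x⟩
  have huniv : (range fun n : ℕ => f^[n] x) = univ :=
    hTT.eq_univ_of_mapsTo hfin.isClosed ⟨x, hint⟩ hmaps
      (mapsTo_compl_of_subset_image (hper.range_iterate_subset_image hk) hinj)
  have hNplus (U V : Set X) (_ : IsOpen U) (hU : U.Nonempty) (_ : IsOpen V) (hV : V.Nonempty) :
      (Nplus f U V).Infinite := by
    obtain ⟨u, hl⟩ := hU
    obtain ⟨v, hm⟩ := hV
    obtain ⟨l, rfl⟩ := eq_univ_iff_forall.mp huniv u
    obtain ⟨m, rfl⟩ := eq_univ_iff_forall.mp huniv v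
    obtain ⟨j, hj⟩ := hper.exists_iterate_iterate_eq hk l m
    exact (hper.apply_iterate l).infinite_nplus hk hl (by rwa [hj])
  refine ⟨hfin, huniv, ⟨x, huniv ▸ dense_univ⟩,
    fun U V hUo hU hVo hV => (hNplus U V hUo hU hVo hV).nonempty, hNplus, x, ?_⟩
  exact eq_univ_of_univ_subset (huniv ▸ hper.range_iterate_subset_omegaLimitSet hk)

theorem periodic_isolated_case {X : Type*} [TopologicalSpace X] [T2Space X]
    (f : X → X)
    (hiso : ∃ z : X, IsOpen ({z} : Set X))
    (hqc : ∀ n : ℕ, QuasiCont (f^[n]))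
    (hTT : TTprop f)
    (hone : ∀ z : X, IsOpen ({z} : Set X) → ∃! w : X, f w = z)
    (x : X) (hx : IsOpen ({x} : Set X)) (hper : ∃ k : ℕ, 0 < k ∧ f^[k] x = x) :
    (Set.range fun n : ℕ => f^[n] x).Finite ∧
      (Set.range fun n : ℕ => f^[n] x) = Set.univ ∧
      (∃ y : X, Dense (Set.range fun n : ℕ => f^[n] y)) ∧
      TTplus f ∧
      (∀ U V : Set X, IsOpen U → U.Nonempty → IsOpen V → V.Nonempty →
        (Nplus f U V).Infinite) ∧
      (∃ y : X, omegaLimitSet f y = Set.univ) :=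
  periodic_isolated_case_general f hqc hTT hone x hx hper
end

section
/- Let (X,f) be a dynamical system on a Hausdorff space X with at least one isolated point, where fⁿ is quasi-continuous for all n ∈ ℕ. Then (X,f) satisfies TT if and only if (X,f) satisfies DO: there is an orbit sequence ⟨x_k : k ∈ ℤ⟩ (with f(x_k) = x_{k+1} for all k), or an orbit sequence ⟨x_k : k ≥ n⟩ with f(x_k) = x_{k+1} for k ≥ n and f⁻¹(x_n) = ∅, whose set of elements is dense in X. -/
open Set Function Topology

/-!
Fix an isolated point `z`. If a nonempty open set `V` misses the forward orbit of `z`, TT applied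
to `{z}` and `V` gives a point of `V` sent to `z` by some `fⁿ`, and quasi-continuity of `fⁿ` gives
an open `W ⊆ V` with `fⁿ(W) = {z}`. For the least such `n` the set `W` never returns to itself,
and TT in a Hausdorff space forces such a `W` to be a single, isolated point. Hence the forward
orbit of `z` together with the isolated points that reach `z` is dense. By TT applied to
singletons these isolated points form a chain for reachability, ordered by their hitting times of
`z`. If the hitting times are unbounded, the chain is a backward orbit of `z`, giving an orbit
indexed by `ℤ`; otherwise a deepest point has a dense forward orbit, which is extended backwards
as far as preimages allow. Conversely, the elements of an orbit sequence are pairwise comparable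
for reachability, so density of the orbit gives TT at once.
-/

section

variable {X : Type*} {f : X → X}

def Reaches (f : X → X) (a b : X) : Prop :=
  ∃ n, f^[n] a = b

instance : Std.Refl (Reaches f) :=
  ⟨fun _ => ⟨0, rfl⟩⟩

theorem Reaches.trans {a b c : X} : Reaches f a b → Reaches f b c → Reaches f a c := by
  rintro ⟨m, rfl⟩ ⟨n, rfl⟩
  exact ⟨n + m, iterate_add_apply f n m a⟩

theorem isChain_reaches_setOf_reaches (q : X) : IsChain (Reaches f) {y | Reaches f q y} := by
  rintro _ ⟨i, rfl⟩ _ ⟨j, rfl⟩ -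
  rcases le_total i j with hij | hji
  · exact Or.inl ⟨j - i, by rw [← iterate_add_apply, Nat.sub_add_cancel hij]⟩
  · exact Or.inr ⟨i - j, by rw [← iterate_add_apply, Nat.sub_add_cancel hji]⟩

section OrbitSequences

theorem iterate_apply_eq_of_orbit_int {x : ℤ → X} (hx : ∀ k, f (x k) = x (k + 1)) (i : ℤ) :
    ∀ m : ℕ, f^[m] (x i) = x (i + m)
  | 0 => by simp
  | m + 1 => by
    rw [iterate_succ_apply', iterate_apply_eq_of_orbit_int hx i m, hx, Nat.cast_succ, add_assoc]

theorem iterate_apply_eq_of_orbit_nat {x : ℕ → X} {n : ℕ} (hx : ∀ k ≥ n, f (x k) = x (k + 1)) :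
    ∀ m : ℕ, f^[m] (x n) = x (n + m)
  | 0 => rfl
  | m + 1 => by
    rw [iterate_succ_apply', iterate_apply_eq_of_orbit_nat hx m, hx _ (Nat.le_add_right n m)]
    rfl

theorem isChain_reaches_range_of_orbit_int {x : ℤ → X} (hx : ∀ k, f (x k) = x (k + 1)) :
    IsChain (Reaches f) (range x) := by
  rintro _ ⟨i, rfl⟩ _ ⟨j, rfl⟩ -
  rcases le_total i j with hij | hji
  · obtain ⟨m, rfl⟩ := Int.le.dest hij
    exact Or.inl ⟨m, iterate_apply_eq_of_orbit_int hx i m⟩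
  · obtain ⟨m, rfl⟩ := Int.le.dest hji
    exact Or.inr ⟨m, iterate_apply_eq_of_orbit_int hx j m⟩

variable [TopologicalSpace X]

def DOprop (f : X → X) : Prop :=
  (∃ x : ℤ → X, (∀ k : ℤ, f (x k) = x (k + 1)) ∧ Dense (Set.range x)) ∨
    (∃ n : ℕ, ∃ x : ℕ → X, (∀ k ≥ n, f (x k) = x (k + 1)) ∧
      f ⁻¹' {x n} = ∅ ∧ Dense {y : X | ∃ k ≥ n, x k = y})

theorem ttprop_of_dense_of_isChain {D : Set X} (hD : Dense D) (hchain : IsChain (Reaches f) D) :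
    TTprop f := by
  intro U V hU hUne hV hVne
  obtain ⟨a, haU, haD⟩ := hD.inter_open_nonempty U hU hUne
  obtain ⟨b, hbV, hbD⟩ := hD.inter_open_nonempty V hV hVne
  rcases hchain.total haD hbD with ⟨m, hm⟩ | ⟨m, hm⟩
  · exact ⟨m, Or.inl ⟨b, ⟨a, haU, hm⟩, hbV⟩⟩
  · exact ⟨m, Or.inr ⟨a, ⟨b, hbV, hm⟩, haU⟩⟩

theorem DOprop.ttprop (h : DOprop f) : TTprop f := by
  rcases h with ⟨x, hx, hdense⟩ | ⟨n, x, hx, -, hdense⟩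
  · exact ttprop_of_dense_of_isChain hdense (isChain_reaches_range_of_orbit_int hx)
  · refine ttprop_of_dense_of_isChain (hdense.mono ?_) (isChain_reaches_setOf_reaches (x n))
    rintro _ ⟨k, hk, rfl⟩
    exact ⟨k - n, by rw [iterate_apply_eq_of_orbit_nat hx, Nat.add_sub_cancel' hk]⟩

end OrbitSequences

section BackwardChains

variable (f) in
def orbitOfBackwardChain (b : ℕ → X) : ℤ → X
  | .ofNat m => f^[m] (b 0)
  | .negSucc m => b (m + 1)

theorem orbitOfBackwardChain_succ {b : ℕ → X} (hb : ∀ k, f (b (k + 1)) = b k) :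
    ∀ i : ℤ, f (orbitOfBackwardChain f b i) = orbitOfBackwardChain f b (i + 1)
  | .ofNat m => (iterate_succ_apply' f m (b 0)).symm
  | .negSucc 0 => hb 0
  | .negSucc (m + 1) => hb (m + 1)

theorem union_range_subset_range_orbitOfBackwardChain (b : ℕ → X) :
    {y | Reaches f (b 0) y} ∪ range b ⊆ range (orbitOfBackwardChain f b) := by
  rintro _ (⟨m, rfl⟩ | ⟨_ | m, rfl⟩)
  · exact ⟨.ofNat m, rfl⟩
  · exact ⟨0, rfl⟩
  · exact ⟨.negSucc m, rfl⟩

variable (f) in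
theorem exists_backward_chain_or_root (q : X) :
    (∃ b : ℕ → X, b 0 = q ∧ ∀ k, f (b (k + 1)) = b k) ∨ ∃ p, Reaches f p q ∧ f ⁻¹' {p} = ∅ := by
  by_cases hroot : ∃ p, Reaches f p q ∧ f ⁻¹' {p} = ∅
  · exact Or.inr hroot
  push Not at hroot
  have : Nonempty X := ⟨q⟩
  let b : ℕ → X := fun k => (invFun f)^[k] q
  have hstep : ∀ k, f^[k] (b k) = q → f (b (k + 1)) = b k := fun k hk => by
    obtain ⟨u, hu⟩ := hroot (b k) ⟨k, hk⟩
    simpa only [b, iterate_succ_apply'] using invFun_eq ⟨u, hu⟩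
  have hreach : ∀ k, f^[k] (b k) = q := by
    intro k
    induction k with
    | zero => rfl
    | succ k ih => rw [iterate_succ_apply, hstep k ih, ih]
  exact Or.inl ⟨b, rfl, fun k => hstep k (hreach k)⟩

variable [TopologicalSpace X]

theorem doprop_of_backward_chain {b : ℕ → X} (hb : ∀ k, f (b (k + 1)) = b k)
    (hdense : Dense ({y | Reaches f (b 0) y} ∪ range b)) : DOprop f :=
  Or.inl ⟨orbitOfBackwardChain f b, orbitOfBackwardChain_succ hb,
    hdense.mono (union_range_subset_range_orbitOfBackwardChain b)⟩

theorem doprop_of_dense_setOf_reaches {q : X} (hq : Dense {y | Reaches f q y}) : DOprop f := by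
  rcases exists_backward_chain_or_root f q with ⟨b, rfl, hb⟩ | ⟨p, ⟨n, hpq⟩, hp⟩
  · exact doprop_of_backward_chain hb (hq.mono subset_union_left)
  · refine Or.inr ⟨0, fun k => f^[k] p, fun k _ => (iterate_succ_apply' f k p).symm, hp,
      hq.mono ?_⟩
    rintro _ ⟨m, rfl⟩
    exact ⟨m + n, Nat.zero_le _, by simp only [iterate_add_apply, hpq]⟩

end BackwardChains

section HittingTimes

variable {z : X}

variable (f) in
noncomputable def hitTime (z w : X) : ℕ :=
  sInf {n | f^[n] w = z}

theorem iterate_hitTime {w : X} (h : Reaches f w z) : f^[hitTime f z w] w = z :=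
  Nat.sInf_mem h

theorem hitTime_le {w : X} {n : ℕ} (h : f^[n] w = z) : hitTime f z w ≤ n :=
  Nat.sInf_le h

theorem hitTime_eq_add {w : X} {m : ℕ} (hw : Reaches f w z) (hz : ¬ Reaches f z (f^[m] w)) :
    hitTime f z w = m + hitTime f z (f^[m] w) := by
  have hlt : m < hitTime f z w := by
    by_contra! hle
    refine hz ⟨m - hitTime f z w, ?_⟩
    conv_rhs => rw [← Nat.sub_add_cancel hle, iterate_add_apply, iterate_hitTime hw]
  have hreach : f^[hitTime f z w - m] (f^[m] w) = z := by
    rw [← iterate_add_apply, Nat.sub_add_cancel hlt.le, iterate_hitTime hw]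
  have hback : f^[hitTime f z (f^[m] w) + m] w = z := by
    rw [iterate_add_apply, iterate_hitTime ⟨_, hreach⟩]
  have := hitTime_le hreach
  have := hitTime_le hback
  omega

variable {S : Set X} (hreach : ∀ w ∈ S, Reaches f w z) (hnot : ∀ w ∈ S, ¬ Reaches f z w)
  (hchain : IsChain (Reaches f) S)
include hreach hnot hchain

theorem iterate_hitTime_sub_hitTime {a b : X} (ha : a ∈ S) (hb : b ∈ S)
    (hle : hitTime f z b ≤ hitTime f z a) : f^[hitTime f z a - hitTime f z b] a = b := by
  rcases hchain.total ha hb with ⟨m, rfl⟩ | ⟨m, rfl⟩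
  · rw [hitTime_eq_add (hreach a ha) (hnot _ hb), Nat.add_sub_cancel]
  · have := hitTime_eq_add (hreach b hb) (hnot _ ha)
    obtain rfl : m = 0 := by omega
    simp only [iterate_zero_apply, Nat.sub_self]

theorem iterate_hitTime_sub_eq {a b : X} (ha : a ∈ S) (hb : b ∈ S) {k : ℕ}
    (hka : k ≤ hitTime f z a) (hkb : k ≤ hitTime f z b) :
    f^[hitTime f z a - k] a = f^[hitTime f z b - k] b := by
  wlog hba : hitTime f z b ≤ hitTime f z a generalizing a b
  · exact (this hb ha hkb hka (le_of_not_ge hba)).symm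
  calc f^[hitTime f z a - k] a = f^[hitTime f z b - k] (f^[hitTime f z a - hitTime f z b] a) := by
        rw [← iterate_add_apply]
        congr 1
        omega
    _ = f^[hitTime f z b - k] b := by rw [iterate_hitTime_sub_hitTime hreach hnot hchain ha hb hba]

theorem exists_backward_chain_of_not_bddAbove (hunb : ¬ BddAbove (hitTime f z '' S)) :
    ∃ b : ℕ → X, b 0 = z ∧ (∀ k, f (b (k + 1)) = b k) ∧ S ⊆ range b := by
  have hdeep : ∀ k, ∃ w ∈ S, k ≤ hitTime f z w := fun k => by
    obtain ⟨_, ⟨w, hw, rfl⟩, hlt⟩ := not_bddAbove_iff.1 hunb k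
    exact ⟨w, hw, hlt.le⟩
  choose c hcS hc using hdeep
  have hcomm : ∀ w ∈ S, ∀ k ≤ hitTime f z w,
      f^[hitTime f z w - k] w = f^[hitTime f z (c k) - k] (c k) := fun w hw k hk =>
    iterate_hitTime_sub_eq hreach hnot hchain hw (hcS k) hk (hc k)
  refine ⟨fun k => f^[hitTime f z (c k) - k] (c k), iterate_hitTime (hreach _ (hcS 0)), ?_, ?_⟩
  · intro k
    have hk := hc (k + 1)
    dsimp only
    rw [← iterate_succ_apply' f, ← hcomm _ (hcS (k + 1)) k (by omega)]
    congr 1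
    omega
  · intro w hw
    refine ⟨hitTime f z w, ?_⟩
    dsimp only
    rw [← hcomm w hw _ le_rfl, Nat.sub_self, iterate_zero_apply]

theorem exists_reaches_of_bddAbove (hbdd : BddAbove (hitTime f z '' S)) :
    ∃ q, Reaches f q z ∧ ∀ w ∈ S, Reaches f q w := by
  rcases S.eq_empty_or_nonempty with rfl | hne
  · exact ⟨z, refl z, fun _ => False.elim⟩
  obtain ⟨q, hqS, hq⟩ := Nat.sSup_mem (hne.image _) hbdd
  refine ⟨q, hreach q hqS, fun w hw =>
    ⟨_, iterate_hitTime_sub_hitTime hreach hnot hchain hqS hw ?_⟩⟩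
  exact hq ▸ le_csSup hbdd (mem_image_of_mem _ hw)

end HittingTimes

section Isolated

variable [TopologicalSpace X]

theorem TTprop.reaches_or_reaches (htt : TTprop f) {a b : X} (ha : IsOpen {a}) (hb : IsOpen {b}) :
    Reaches f a b ∨ Reaches f b a := by
  obtain ⟨m, ⟨_, ⟨_, rfl, hm⟩, rfl⟩ | ⟨_, ⟨_, rfl, hm⟩, rfl⟩⟩ :=
    htt {a} {b} ha (singleton_nonempty a) hb (singleton_nonempty b)
  exacts [Or.inl ⟨m, hm⟩, Or.inr ⟨m, hm⟩]

theorem TTprop.subsingleton_of_forall_iterate_notMem [T2Space X] (htt : TTprop f) {W : Set X}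
    (hW : IsOpen W) (hwand : ∀ m ≥ 1, ∀ u ∈ W, f^[m] u ∉ W) : W.Subsingleton := by
  intro a ha b hb
  by_contra hab
  obtain ⟨A, B, hA, hB, haA, hbB, hAB⟩ := t2_separation hab
  have hnot : ∀ {C D : Set X}, Disjoint C D → ∀ m, m ∉ Nplus f (W ∩ C) (W ∩ D) := by
    rintro C D hCD m ⟨_, ⟨u, ⟨huW, huC⟩, rfl⟩, hmW, hmD⟩
    rcases Nat.eq_zero_or_pos m with rfl | hm
    · exact hCD.ne_of_mem huC hmD rfl
    · exact hwand m hm u huW hmW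
  obtain ⟨m, hm | hm⟩ := htt (W ∩ A) (W ∩ B) (hW.inter hA) ⟨a, ha, haA⟩ (hW.inter hB) ⟨b, hb, hbB⟩
  exacts [hnot hAB m hm, hnot hAB.symm m hm]

variable [T2Space X] {z : X} (hz : IsOpen {z}) (hqc : ∀ n, QuasiCont f^[n]) (htt : TTprop f)
include hz hqc htt

theorem exists_isOpen_singleton_reaches {V : Set X} (hV : IsOpen V) (hVne : V.Nonempty)
    (hVz : ∀ v ∈ V, ¬ Reaches f z v) : ∃ w ∈ V, IsOpen {w} ∧ Reaches f w z := by
  classical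
  have hex : ∃ n, ∃ W ⊆ V, IsOpen W ∧ W.Nonempty ∧ f^[n] '' W ⊆ {z} := by
    obtain ⟨n, ⟨_, ⟨_, rfl, rfl⟩, hnV⟩ | ⟨_, ⟨v, hv, rfl⟩, hvz⟩⟩ :=
      htt {z} V hz (singleton_nonempty z) hV hVne
    · exact absurd ⟨n, rfl⟩ (hVz _ hnV)
    · obtain ⟨W, hW, hWne, hWV, hWz⟩ := hqc n v {z} hz hvz V hV hv
      exact ⟨n, W, hWV, hW, hWne, hWz⟩
  obtain ⟨W, hWV, hW, ⟨w, hw⟩, hWz⟩ := Nat.find_spec hex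
  have hz_of_mem : ∀ u ∈ W, f^[Nat.find hex] u = z := fun u hu => hWz ⟨u, hu, rfl⟩
  -- A return `f^[m] u ∈ W` with `0 < m < N` would, by quasi-continuity of `f^[N - m]` at
  -- `f^[m] u`, produce an open subset of `W` sent to `z` in fewer than `N` steps.
  have hwand : ∀ m ≥ 1, ∀ u ∈ W, f^[m] u ∉ W := by
    intro m hm u hu hmu
    rcases lt_or_ge m (Nat.find hex) with hlt | hge
    · have hmz : f^[Nat.find hex - m] (f^[m] u) ∈ ({z} : Set X) := by
        rw [← iterate_add_apply, Nat.sub_add_cancel hlt.le]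
        exact hz_of_mem u hu
      obtain ⟨W', hW', hW'ne, hW'W, hW'z⟩ := hqc _ _ {z} hz hmz W hW hmu
      have := Nat.find_min' hex ⟨W', hW'W.trans hWV, hW', hW'ne, hW'z⟩
      omega
    · refine hVz _ (hWV hmu) ⟨m - Nat.find hex, ?_⟩
      conv_rhs => rw [← Nat.sub_add_cancel hge, iterate_add_apply, hz_of_mem u hu]
  have hWw : W = {w} := (htt.subsingleton_of_forall_iterate_notMem hW hwand).eq_singleton_of_mem hw
  exact ⟨w, hWV hw, hWw ▸ hW, _, hz_of_mem w hw⟩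

theorem dense_setOf_reaches_union_isolated_reaching :
    Dense ({y | Reaches f z y} ∪ {w | IsOpen {w} ∧ Reaches f w z ∧ ¬ Reaches f z w}) := by
  refine dense_iff_inter_open.2 fun U hU hUne => ?_
  by_cases hmeet : ∃ v ∈ U, Reaches f z v
  · obtain ⟨v, hvU, hzv⟩ := hmeet
    exact ⟨v, hvU, Or.inl hzv⟩
  · push Not at hmeet
    obtain ⟨w, hwU, hw, hwz⟩ := exists_isOpen_singleton_reaches hz hqc htt hU hUne hmeet
    exact ⟨w, hwU, Or.inr ⟨hw, hwz, hmeet w hwU⟩⟩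

end Isolated

end

theorem TT_iff_DO_with_isolated {X : Type*} [TopologicalSpace X] [T2Space X]
    (f : X → X)
    (hiso : ∃ z : X, IsOpen ({z} : Set X))
    (hqc : ∀ n : ℕ, QuasiCont (f^[n])) :
    TTprop f ↔
      ((∃ x : ℤ → X, (∀ k : ℤ, f (x k) = x (k + 1)) ∧ Dense (Set.range x)) ∨
        (∃ n : ℕ, ∃ x : ℕ → X, (∀ k ≥ n, f (x k) = x (k + 1)) ∧
          f ⁻¹' {x n} = ∅ ∧ Dense {y : X | ∃ k ≥ n, x k = y})) := by
  refine ⟨fun htt => ?_, DOprop.ttprop⟩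
  obtain ⟨z, hz⟩ := hiso
  have hdense := dense_setOf_reaches_union_isolated_reaching hz hqc htt
  set S := {w | IsOpen {w} ∧ Reaches f w z ∧ ¬ Reaches f z w}
  have hreach : ∀ w ∈ S, Reaches f w z := fun w hw => hw.2.1
  have hnot : ∀ w ∈ S, ¬ Reaches f z w := fun w hw => hw.2.2
  have hchain : IsChain (Reaches f) S := fun a ha b hb _ => htt.reaches_or_reaches ha.1 hb.1
  by_cases hbdd : BddAbove (hitTime f z '' S)
  · obtain ⟨q, hqz, hqS⟩ := exists_reaches_of_bddAbove hreach hnot hchain hbdd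
    refine doprop_of_dense_setOf_reaches (q := q) (hdense.mono ?_)
    rintro y (hzy | hy)
    exacts [hqz.trans hzy, hqS y hy]
  · obtain ⟨b, rfl, hb, hSb⟩ := exists_backward_chain_of_not_bddAbove hreach hnot hchain hbdd
    exact doprop_of_backward_chain hb (hdense.mono (union_subset_union_right _ hSb))
end
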